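/- Every pipe dream P ∈ Pipes(v_0, v(Ω)) contains P_* as a subset; that is, P has a cross tile in every position of the northwest d_y×d_x subgrid lying outside the snake region. -/

import Mathlib

open scoped Classical

noncomputable section

namespace QP

/-! ### Permutations, Demazure products and pipe dreams.

All permutations are modeled as elements of `Equiv.Perm ℕ` (with 0-indexed
positions); a permutation "in `S_m`" is one fixing every `i ≥ m`. -/

/-- 0-Hecke (Demazure) right multiplication by the simple transposition `τᵢ = (i, i+1)`. -/
def hstep (u : Equiv.Perm ℕ) (i : ℕ) : Equiv.Perm ℕ :=
  if u i < u (i + 1) then u * Equiv.swap i (i + 1) else u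

/-- Demazure product of a word in the simple transpositions (0-indexed). -/
def hword (l : List ℕ) : Equiv.Perm ℕ := l.foldl hstep 1

/-- Row reading word of a pipe dream on a `k × l` grid: rows top-to-bottom, within
each row right-to-left; a cross at (0-indexed) `(i,j)` contributes the letter `i+j`. -/
def pipeWord (k l : ℕ) (P : Finset (ℕ × ℕ)) : List ℕ :=
  (List.range k).flatMap fun i =>
    (List.range l).reverse.filterMap fun j => if (i, j) ∈ P then some (i + j) else none

/-- Demazure product `δ(P)` of a pipe dream on a `k × l` grid. -/
def demazure (k l : ℕ) (P : Finset (ℕ × ℕ)) : Equiv.Perm ℕ := hword (pipeWord k l P)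

/-- Coxeter length of a permutation, computed as the number of inversions among
positions `< m` (the true length whenever the permutation fixes all `i ≥ m`). -/
def lenB (m : ℕ) (v : Equiv.Perm ℕ) : ℕ :=
  ((Finset.range m ×ˢ Finset.range m).filter fun p => p.1 < p.2 ∧ v p.2 < v p.1).card

/-- `v` fixes every point `≥ m`, i.e. `v ∈ S_m`. -/
def fixesFrom (m : ℕ) (v : Equiv.Perm ℕ) : Prop := ∀ i, m ≤ i → v i = i

/-- A `k × l` partial permutation matrix, recorded as its set of positions of 1s
(0-indexed). -/
def IsPartialPerm (k l : ℕ) (w : Finset (ℕ × ℕ)) : Prop :=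
  (∀ p ∈ w, p.1 < k ∧ p.2 < l) ∧
  (∀ p ∈ w, ∀ q ∈ w, p.1 = q.1 → p = q) ∧
  (∀ p ∈ w, ∀ q ∈ w, p.2 = q.2 → p = q)

/-- 180° rotation of a subset of the `k × l` grid. -/
def rotF (k l : ℕ) (w : Finset (ℕ × ℕ)) : Finset (ℕ × ℕ) :=
  w.image fun p => (k - 1 - p.1, l - 1 - p.2)

/-- Transpose of a subset of a grid. -/
def transposeF (w : Finset (ℕ × ℕ)) : Finset (ℕ × ℕ) := w.image fun p => (p.2, p.1)

/-- The northwest `k × l` truncation of (the matrix of) a permutation. -/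
def matrixOf (k l : ℕ) (v : Equiv.Perm ℕ) : Finset (ℕ × ℕ) :=
  (Finset.range k ×ˢ Finset.range l).filter fun p => v p.1 = p.2

/-- `v` is a completion of the `k × l` partial permutation `w`, viewed inside
`S_{k+l}`: its northwest `k × l` corner is exactly `w` and it fixes all `i ≥ k+l`. -/
def IsCompletion (k l : ℕ) (w : Finset (ℕ × ℕ)) (v : Equiv.Perm ℕ) : Prop :=
  (∀ i < k, ∀ j < l, (v i = j ↔ (i, j) ∈ w)) ∧ fixesFrom (k + l) v

/-- The minimal length completion `c(w)` of a `k × l` partial permutation matrix,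
viewed in `S_{k+l}` (equivalently, the minimal-dimension completion extended by the
identity). -/
def completion (k l : ℕ) (w : Finset (ℕ × ℕ)) : Equiv.Perm ℕ :=
  if h : ∃ v, IsCompletion k l w v ∧
      ∀ u, IsCompletion k l w u → lenB (k + l) v ≤ lenB (k + l) u
  then h.choose else 1

def w0fun (m : ℕ) (i : ℕ) : ℕ := if i < m then m - 1 - i else i

lemma w0_invol (m : ℕ) : Function.Involutive (w0fun m) := by
  intro i; unfold w0fun; split_ifs <;> omega

/-- The longest element of `S_m` (as a permutation of `ℕ` fixing `i ≥ m`). -/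
def w0p (m : ℕ) : Equiv.Perm ℕ := (w0_invol m).toPerm

/-- 180° rotation of (the matrix of) a permutation in `S_m`. -/
def rotPerm (m : ℕ) (v : Equiv.Perm ℕ) : Equiv.Perm ℕ := w0p m * v * w0p m

/-- `1^p × v`: the permutation fixing `0, …, p-1` and acting by a shifted copy of `v`
beyond. -/
def shiftPerm (p : ℕ) (v : Equiv.Perm ℕ) : Equiv.Perm ℕ where
  toFun i := if i < p then i else v (i - p) + p
  invFun i := if i < p then i else v.symm (i - p) + p
  left_inv := by
    intro i
    by_cases h : i < p
    · simp [h]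
    · have h2 : ¬ (v (i - p) + p < p) := by omega
      simp only [if_neg h, if_neg h2, Nat.add_sub_cancel, Equiv.symm_apply_apply]
      omega
  right_inv := by
    intro i
    by_cases h : i < p
    · simp [h]
    · have h2 : ¬ (v.symm (i - p) + p < p) := by omega
      simp only [if_neg h, if_neg h2, Nat.add_sub_cancel, Equiv.apply_symm_apply]
      omega

/-- One step of the 0-Hecke product of two permutations: repeatedly peel left
descents off the second factor. The first argument is fuel (an upper bound for the
length of the second factor). -/
def heckeAux : ℕ → Equiv.Perm ℕ → Equiv.Perm ℕ → Equiv.Perm ℕ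
  | 0, u, _ => u
  | fuel + 1, u, v =>
    if h : ∃ i, v.symm (i + 1) < v.symm i then
      heckeAux fuel (hstep u (Nat.find h)) (Equiv.swap (Nat.find h) (Nat.find h + 1) * v)
    else u

/-- 0-Hecke (Demazure) product of two permutations of `S_m`. -/
def heckeMul (m : ℕ) (u v : Equiv.Perm ℕ) : Equiv.Perm ℕ := heckeAux (lenB m v) u v

/-- 0-Hecke (Demazure) product of a list of permutations of `S_m`. -/
def heckeList (m : ℕ) (l : List (Equiv.Perm ℕ)) : Equiv.Perm ℕ := l.foldl (heckeMul m) 1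

/-- All pipe dreams on the `k × l` grid with Demazure product `v`. -/
def pipesFin (k l : ℕ) (v : Equiv.Perm ℕ) : Finset (Finset (ℕ × ℕ)) :=
  ((Finset.range k ×ˢ Finset.range l).powerset).filter fun P => demazure k l P = v

/-- All reduced pipe dreams on the `k × l` grid with Demazure product `v`. -/
def rpipesFin (k l : ℕ) (v : Equiv.Perm ℕ) : Finset (Finset (ℕ × ℕ)) :=
  (pipesFin k l v).filter fun P => P.card = lenB (k + l) v

end QP

namespace QP

/-! ### The bipartite quiver block structure.

A bipartite type `A` quiver has source vertices `y_0, …, y_n` and sink vertices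
`x_1, …, x_n` (indices increasing right-to-left), arrows `β_k : y_k → x_k` and
`α_k : y_{k-1} → x_k`.  Dimension vectors are recorded as `dx dy : ℕ → ℕ` (the
relevant values being `dx 1, …, dx n` and `dy 0, …, dy n`).

`d × d` grids carry the block structure with row blocks `y_0, …, y_n, x_n, …, x_1`
and column blocks `x_n, …, x_1, y_0, …, y_n`; everything is 0-indexed. -/

def dX (n : ℕ) (dx : ℕ → ℕ) : ℕ := ∑ i ∈ Finset.Icc 1 n, dx i

def dY (n : ℕ) (dy : ℕ → ℕ) : ℕ := ∑ i ∈ Finset.range (n + 1), dy i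

def dd (n : ℕ) (dx dy : ℕ → ℕ) : ℕ := dY n dy + dX n dx

/-- Row offset of the row block `y_j`. -/
def rowY (dy : ℕ → ℕ) (j : ℕ) : ℕ := ∑ i ∈ Finset.range j, dy i

/-- Column offset of the column block `x_k`. -/
def colX (n : ℕ) (dx : ℕ → ℕ) (k : ℕ) : ℕ := ∑ i ∈ Finset.Icc (k + 1) n, dx i

/-- Row offset of the row block `x_k`. -/
def rowX (n : ℕ) (dx dy : ℕ → ℕ) (k : ℕ) : ℕ := dY n dy + colX n dx k

/-- Column offset of the column block `y_j`. -/
def colY (n : ℕ) (dx dy : ℕ → ℕ) (j : ℕ) : ℕ := dX n dx + rowY dy j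

/-- The block `α_k`, at (row block `y_{k-1}`, column block `x_k`). -/
def alphaBlock (n : ℕ) (dx dy : ℕ → ℕ) (k : ℕ) : Finset (ℕ × ℕ) :=
  Finset.Ico (rowY dy (k - 1)) (rowY dy (k - 1) + dy (k - 1)) ×ˢ
    Finset.Ico (colX n dx k) (colX n dx k + dx k)

/-- The block `β_k`, at (row block `y_k`, column block `x_k`). -/
def betaBlock (n : ℕ) (dx dy : ℕ → ℕ) (k : ℕ) : Finset (ℕ × ℕ) :=
  Finset.Ico (rowY dy k) (rowY dy k + dy k) ×ˢ
    Finset.Ico (colX n dx k) (colX n dx k + dx k)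

/-- The snake region: the union of the blocks `α_k, β_k`, `1 ≤ k ≤ n`. -/
def snake (n : ℕ) (dx dy : ℕ → ℕ) : Finset (ℕ × ℕ) :=
  (Finset.Icc 1 n).biUnion fun k => alphaBlock n dx dy k ∪ betaBlock n dx dy k

/-- `P_*`: crosses at exactly the positions of the northwest `d_y × d_x` subgrid
outside the snake region. -/
def Pstar (n : ℕ) (dx dy : ℕ → ℕ) : Finset (ℕ × ℕ) :=
  (Finset.range (dY n dy) ×ˢ Finset.range (dX n dx)) \ snake n dx dy

/-- `Pipes(v_0, v)`: pipe dreams on the `d × d` grid with Demazure product `v`, all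
of whose crosses lie in the northwest `d_y × d_x` subgrid. -/
def pipesNW (n : ℕ) (dx dy : ℕ → ℕ) (v : Equiv.Perm ℕ) : Finset (Finset (ℕ × ℕ)) :=
  ((Finset.range (dY n dy) ×ˢ Finset.range (dX n dx)).powerset).filter fun P =>
    demazure (dd n dx dy) (dd n dx dy) P = v

/-- `RPipes(v_0, v)`: the reduced members of `Pipes(v_0, v)`. -/
def rpipesNW (n : ℕ) (dx dy : ℕ → ℕ) (v : Equiv.Perm ℕ) : Finset (Finset (ℕ × ℕ)) :=
  (pipesNW n dx dy v).filter fun P => P.card = lenB (dd n dx dy) v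

/-- The mini pipe dream `P_k`: restriction of `P` to the block `β_k`, in local
coordinates. -/
def miniB (n : ℕ) (dx dy : ℕ → ℕ) (P : Finset (ℕ × ℕ)) (k : ℕ) : Finset (ℕ × ℕ) :=
  (P ∩ betaBlock n dx dy k).image fun p => (p.1 - rowY dy k, p.2 - colX n dx k)

/-- The mini pipe dream `P^k`: restriction of `P` to the block `α_k`, in local
coordinates. -/
def miniA (n : ℕ) (dx dy : ℕ → ℕ) (P : Finset (ℕ × ℕ)) (k : ℕ) : Finset (ℕ × ℕ) :=
  (P ∩ alphaBlock n dx dy k).image fun p => (p.1 - rowY dy (k - 1), p.2 - colX n dx k)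

/-! ### Lacing diagrams and the group `S_𝐝`. -/

/-- Data of a lacing diagram: partial permutations `w_k` (of size `dy k × dx k`,
for the arrows `β_k`) and `w^k` (of size `dy (k-1) × dx k`, for the arrows `α_k`). -/
abbrev LaceData := (ℕ → Finset (ℕ × ℕ)) × (ℕ → Finset (ℕ × ℕ))

/-- Elements of `S_𝐝 = ∏_k (S_{β_k} × S_{α_k})`: tuples `(v_k, v^k)_k` of
permutations, `v_k ∈ S_{dy k + dx k}` and `v^k ∈ S_{dy (k-1) + dx k}`. -/
abbrev SD := (ℕ → Equiv.Perm ℕ) × (ℕ → Equiv.Perm ℕ)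

def IsLacingDiagram (n : ℕ) (dx dy : ℕ → ℕ) (L : LaceData) : Prop :=
  (∀ k, 1 ≤ k → k ≤ n →
    IsPartialPerm (dy k) (dx k) (L.1 k) ∧ IsPartialPerm (dy (k - 1)) (dx k) (L.2 k)) ∧
  (∀ k, k = 0 ∨ n < k → L.1 k = ∅ ∧ L.2 k = ∅)

def InSD (n : ℕ) (dx dy : ℕ → ℕ) (x : SD) : Prop :=
  (∀ k, 1 ≤ k → k ≤ n →
    fixesFrom (dy k + dx k) (x.1 k) ∧ fixesFrom (dy (k - 1) + dx k) (x.2 k)) ∧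
  (∀ k, k = 0 ∨ n < k → x.1 k = 1 ∧ x.2 k = 1)

/-- The completion map `𝔠 : Laces(𝐝) → S_𝐝`,
`(w_n, w^n, …) ↦ (c(w_n), c(rot(w^n)), …)`. -/
def cOp (n : ℕ) (dx dy : ℕ → ℕ) (L : LaceData) : SD :=
  (fun k => if 1 ≤ k ∧ k ≤ n then completion (dy k) (dx k) (L.1 k) else 1,
   fun k => if 1 ≤ k ∧ k ≤ n then
      completion (dy (k - 1)) (dx k) (rotF (dy (k - 1)) (dx k) (L.2 k)) else 1)

/-- The truncation map `LD : S_𝐝 → Laces(𝐝)`,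
`(v_k, v^k)_k ↦ (t_k(v_k), rot(t^k(v^k)))_k`. -/
def LDOp (n : ℕ) (dx dy : ℕ → ℕ) (x : SD) : LaceData :=
  (fun k => if 1 ≤ k ∧ k ≤ n then matrixOf (dy k) (dx k) (x.1 k) else ∅,
   fun k => if 1 ≤ k ∧ k ≤ n then
      rotF (dy (k - 1)) (dx k) (matrixOf (dy (k - 1)) (dx k) (x.2 k)) else ∅)

/-- The operation `π` on pipe dreams:
`π(P) = (δ(P_n), δ(rot(P^n)), …, δ(P_1), δ(rot(P^1))) ∈ S_𝐝`. -/
def piOp (n : ℕ) (dx dy : ℕ → ℕ) (P : Finset (ℕ × ℕ)) : SD :=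
  (fun k => if 1 ≤ k ∧ k ≤ n then demazure (dy k) (dx k) (miniB n dx dy P k) else 1,
   fun k => if 1 ≤ k ∧ k ≤ n then
      demazure (dy (k - 1)) (dx k) (rotF (dy (k - 1)) (dx k) (miniA n dx dy P k)) else 1)

/-- "Follow the pipes" for a single pipe dream on a `k × l` grid: the partial
permutation matrix connecting the west wall to the north wall (double crossings of a
pair of pipes being ignored); concretely, the northwest `k × l` truncation of the
matrix of the Demazure product. -/
def followPipes (k l : ℕ) (P : Finset (ℕ × ℕ)) : Finset (ℕ × ℕ) :=
  matrixOf k l (demazure k l P)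

/-- The pipes-to-laces operation `𝔴`. -/
def wOp (n : ℕ) (dx dy : ℕ → ℕ) (P : Finset (ℕ × ℕ)) : LaceData :=
  (fun k => if 1 ≤ k ∧ k ≤ n then followPipes (dy k) (dx k) (miniB n dx dy P k) else ∅,
   fun k => if 1 ≤ k ∧ k ≤ n then
      rotF (dy (k - 1)) (dx k)
        (followPipes (dy (k - 1)) (dx k) (rotF (dy (k - 1)) (dx k) (miniA n dx dy P k)))
    else ∅)

end QP

namespace QP

/-! ### Laces and lace counts.

Columns of a lacing diagram are indexed left-to-right by `1, …, 2n+1`: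
odd position `2m+1` carries the vertex `y_{n-m}`, even position `2m` the vertex
`x_{n-m+1}`. -/

/-- Number of dots in the column at position `p`. -/
def colSize (n : ℕ) (dx dy : ℕ → ℕ) (p : ℕ) : ℕ :=
  if p % 2 = 1 then dy (n - (p - 1) / 2) else dx (n - p / 2 + 1)

/-- The matching (partial permutation) between consecutive columns `p` and `p+1`
of a lacing diagram. -/
def matchingAt (n : ℕ) (_dx _dy : ℕ → ℕ) (L : LaceData) (p : ℕ) : Finset (ℕ × ℕ) :=
  if p % 2 = 1 then L.1 (n - (p - 1) / 2) else transposeF (L.2 (n - p / 2 + 1))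

/-- Composition of relations (partial permutations). -/
def compF (A B : Finset (ℕ × ℕ)) : Finset (ℕ × ℕ) :=
  ((A ×ˢ B).filter fun q => q.1.2 = q.2.1).image fun q => (q.1.1, q.2.2)

/-- Paths of the lacing diagram from column `u` to column `u + t`. -/
def pathF (n : ℕ) (dx dy : ℕ → ℕ) (L : LaceData) (u : ℕ) : ℕ → Finset (ℕ × ℕ)
  | 0 => (Finset.range (colSize n dx dy u)).image fun i => (i, i)
  | t + 1 => compF (pathF n dx dy L u t) (matchingAt n dx dy L (u + t))

/-- Number of paths (strands) of the lacing diagram connecting column `u` to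
column `v` (zero if out of range). -/
def pathCount (n : ℕ) (dx dy : ℕ → ℕ) (L : LaceData) (u v : ℕ) : ℕ :=
  if 1 ≤ u ∧ u ≤ v ∧ v ≤ 2 * n + 1 then (pathF n dx dy L u (v - u)).card else 0

/-- Number of laces with left endpoint in column `u` and right endpoint in column
`v` (by inclusion–exclusion on path counts). -/
def laceCount (n : ℕ) (dx dy : ℕ → ℕ) (L : LaceData) (u v : ℕ) : ℤ :=
  (pathCount n dx dy L u v : ℤ) - pathCount n dx dy L (u - 1) v
    - pathCount n dx dy L u (v + 1) + pathCount n dx dy L (u - 1) (v + 1)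

/-- Two lacing diagrams lie in the same `GL(𝐝)`-orbit iff they have the same number
of laces between any two pairs of columns. -/
def sameOrbit (n : ℕ) (dx dy : ℕ → ℕ) (L L' : LaceData) : Prop :=
  ∀ u v, laceCount n dx dy L u v = laceCount n dx dy L' u v

/-- `|w|`: the number of crossings in the extended lacing diagram of `w`, namely
`Σ_k ℓ(c(w_k)) + Σ_k ℓ(c(rot(w^k)))`. -/
def lacingLength (n : ℕ) (dx dy : ℕ → ℕ) (L : LaceData) : ℕ :=
  (∑ k ∈ Finset.Icc 1 n, lenB (dy k + dx k) (completion (dy k) (dx k) (L.1 k))) +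
  ∑ k ∈ Finset.Icc 1 n,
    lenB (dy (k - 1) + dx k)
      (completion (dy (k - 1)) (dx k) (rotF (dy (k - 1)) (dx k) (L.2 k)))

/-- `W(Ω)`: minimal lacing diagrams in the orbit of `L₀`. -/
def MinimalLacings (n : ℕ) (dx dy : ℕ → ℕ) (L₀ : LaceData) : Set LaceData :=
  {w | IsLacingDiagram n dx dy w ∧ sameOrbit n dx dy w L₀ ∧
    ∀ w', IsLacingDiagram n dx dy w' → sameOrbit n dx dy w' L₀ →
      lacingLength n dx dy w ≤ lacingLength n dx dy w'}

/-! ### The Zelevinsky permutation. -/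

/-- The set of rows of the row block of the vertex at position `p`. -/
def vertRowBlock (n : ℕ) (dx dy : ℕ → ℕ) (p : ℕ) : Finset ℕ :=
  if p % 2 = 1 then
    Finset.Ico (rowY dy (n - (p - 1) / 2)) (rowY dy (n - (p - 1) / 2) + dy (n - (p - 1) / 2))
  else
    Finset.Ico (rowX n dx dy (n - p / 2 + 1)) (rowX n dx dy (n - p / 2 + 1) + dx (n - p / 2 + 1))

/-- The set of columns of the column block of the vertex at position `p`. -/
def vertColBlock (n : ℕ) (dx dy : ℕ → ℕ) (p : ℕ) : Finset ℕ :=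
  if p % 2 = 1 then
    Finset.Ico (colY n dx dy (n - (p - 1) / 2)) (colY n dx dy (n - (p - 1) / 2) + dy (n - (p - 1) / 2))
  else
    Finset.Ico (colX n dx (n - p / 2 + 1)) (colX n dx (n - p / 2 + 1) + dx (n - p / 2 + 1))

/-- Number of 1s of the permutation matrix of `v` in the rows `R` and columns `C`. -/
def onesIn (v : Equiv.Perm ℕ) (R C : Finset ℕ) : ℕ := (R.filter fun i => v i ∈ C).card

/-- `v` is the (bipartite) Zelevinsky permutation of the orbit of the lacing diagram
`L`: conditions (Z1), (Z2) on block entry counts and (Z3) northwest-to-southeast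
arrangement in each block row and block column. -/
def IsZelevinsky (n : ℕ) (dx dy : ℕ → ℕ) (L : LaceData) (v : Equiv.Perm ℕ) : Prop :=
  fixesFrom (dd n dx dy) v ∧
  -- (Z1)
  (∀ pu pv, 1 ≤ pu → pu ≤ pv → pv ≤ 2 * n + 1 →
    (onesIn v (vertRowBlock n dx dy pu) (vertColBlock n dx dy pv) : ℤ)
      = laceCount n dx dy L pu pv) ∧
  -- (Z2)
  (∀ p, 1 ≤ p → p + 1 ≤ 2 * n + 1 →
    onesIn v (vertRowBlock n dx dy (p + 1)) (vertColBlock n dx dy p)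
      = (matchingAt n dx dy L p).card) ∧
  -- (Z3), block rows
  (∀ p, 1 ≤ p → p ≤ 2 * n + 1 → ∀ i ∈ vertRowBlock n dx dy p, ∀ i' ∈ vertRowBlock n dx dy p,
    i < i' →
    (∃ q, 1 ≤ q ∧ q ≤ 2 * n + 1 ∧ v i ∈ vertColBlock n dx dy q ∧ v i' ∈ vertColBlock n dx dy q) →
    v i < v i') ∧
  -- (Z3), block columns
  (∀ p, 1 ≤ p → p ≤ 2 * n + 1 → ∀ j ∈ vertColBlock n dx dy p, ∀ j' ∈ vertColBlock n dx dy p,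
    j < j' →
    (∃ q, 1 ≤ q ∧ q ≤ 2 * n + 1 ∧ v.symm j ∈ vertRowBlock n dx dy q ∧
      v.symm j' ∈ vertRowBlock n dx dy q) →
    v.symm j < v.symm j')

/-- `v_*`: the Zelevinsky permutation of the whole representation space, i.e. the
Zelevinsky permutation of an orbit, of minimal length (the dense orbit). -/
def IsStarZelevinsky (n : ℕ) (dx dy : ℕ → ℕ) (v : Equiv.Perm ℕ) : Prop :=
  (∃ L, IsLacingDiagram n dx dy L ∧ IsZelevinsky n dx dy L v) ∧
  ∀ L' v', IsLacingDiagram n dx dy L' → IsZelevinsky n dx dy L' v' →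
    lenB (dd n dx dy) v ≤ lenB (dd n dx dy) v'

/-! ### `X_Ω`, pipe networks, and moves. -/

/-- `X_Ω = {π(P) : P ∈ Pipes(v_0, v(Ω))}` (here parametrized by `v(Ω)`). -/
def XOmega (n : ℕ) (dx dy : ℕ → ℕ) (vZ : Equiv.Perm ℕ) : Set SD :=
  {x | ∃ P ∈ pipesNW n dx dy vZ, piOp n dx dy P = x}

/-- `X_Ω^red = {π(P) : P ∈ RPipes(v_0, v(Ω))}`. -/
def XOmegaRed (n : ℕ) (dx dy : ℕ → ℕ) (vZ : Equiv.Perm ℕ) : Set SD :=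
  {x | ∃ P ∈ rpipesNW n dx dy vZ, piOp n dx dy P = x}

/-- Pipe networks for a lacing diagram `w`: pipe dreams on the `d_y × d_x` grid
containing `P_*` with `P_k ∈ Pipes(w_k)` and `rot(P^k) ∈ Pipes(w^k)` for all `k`. -/
def PipeNet (n : ℕ) (dx dy : ℕ → ℕ) (w : LaceData) : Set (Finset (ℕ × ℕ)) :=
  {P | (∀ p ∈ P, p.1 < dY n dy ∧ p.2 < dX n dx) ∧ Pstar n dx dy ⊆ P ∧
    ∀ k, 1 ≤ k → k ≤ n →
      demazure (dy k) (dx k) (miniB n dx dy P k) = completion (dy k) (dx k) (w.1 k) ∧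
      demazure (dy (k - 1)) (dx k) (rotF (dy (k - 1)) (dx k) (miniA n dx dy P k))
        = completion (dy (k - 1)) (dx k) (w.2 k)}

/-- PN-reduced pipe networks: each mini pipe dream is a reduced pipe dream of the
corresponding partial permutation. -/
def RPipeNet (n : ℕ) (dx dy : ℕ → ℕ) (w : LaceData) : Set (Finset (ℕ × ℕ)) :=
  {P | P ∈ PipeNet n dx dy w ∧ ∀ k, 1 ≤ k → k ≤ n →
    (miniB n dx dy P k).card = lenB (dy k + dx k) (completion (dy k) (dx k) (w.1 k)) ∧
    (rotF (dy (k - 1)) (dx k) (miniA n dx dy P k)).card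
      = lenB (dy (k - 1) + dx k) (completion (dy (k - 1)) (dx k) (w.2 k))}

def updB (z : SD) (i : ℕ) (p : Equiv.Perm ℕ) : SD := (Function.update z.1 i p, z.2)

def updA (z : SD) (i : ℕ) (p : Equiv.Perm ℕ) : SD := (z.1, Function.update z.2 i p)

/-- The three tuples `(…, τ_k v_i, v^i, …)`, `(…, v_i, rot(τ_{k'} rot(v^i)), …)`,
`(…, τ_k v_i, rot(τ_{k'} rot(v^i)), …)` obtained from the base tuple `z` at a middle
column `x_i` and middle dots `k, k+1` (0-indexed; `k' = dy (i-1) + k`). -/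
def tripleX (dx dy : ℕ → ℕ) (z : SD) (i k : ℕ) : Set SD :=
  {updB z i (Equiv.swap k (k + 1) * z.1 i),
   updA z i (rotPerm (dy (i - 1) + dx i)
     (Equiv.swap (dy (i - 1) + k) (dy (i - 1) + k + 1) * rotPerm (dy (i - 1) + dx i) (z.2 i))),
   updA (updB z i (Equiv.swap k (k + 1) * z.1 i)) i
     (rotPerm (dy (i - 1) + dx i)
       (Equiv.swap (dy (i - 1) + k) (dy (i - 1) + k + 1) * rotPerm (dy (i - 1) + dx i) (z.2 i)))}

/-- The three tuples `(…, v^{i+1}, v_i τ_l, …)`, `(…, rot(rot(v^{i+1}) τ_{l'}), v_i, …)`,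
`(…, rot(rot(v^{i+1}) τ_{l'}), v_i τ_l, …)` obtained from the base tuple `z` at a middle
column `y_i` and middle dots `l, l+1` (0-indexed; `l' = dx (i+1) + l`). -/
def tripleY (dx dy : ℕ → ℕ) (z : SD) (i l : ℕ) : Set SD :=
  {updB z i (z.1 i * Equiv.swap l (l + 1)),
   updA z (i + 1) (rotPerm (dy i + dx (i + 1))
     (rotPerm (dy i + dx (i + 1)) (z.2 (i + 1)) *
       Equiv.swap (dx (i + 1) + l) (dx (i + 1) + l + 1))),
   updA (updB z i (z.1 i * Equiv.swap l (l + 1))) (i + 1)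
     (rotPerm (dy i + dx (i + 1))
       (rotPerm (dy i + dx (i + 1)) (z.2 (i + 1)) *
         Equiv.swap (dx (i + 1) + l) (dx (i + 1) + l + 1)))}

/-- The transposition moves on `S_𝐝` (the moves of the transposition-move lemma,
interchanging any two of the tuples of types 1(a), 1(b), 1(c), respectively
2(a), 2(b), 2(c), under the stated ascent conditions). -/
def Move14Rel (n : ℕ) (dx dy : ℕ → ℕ) (u u' : SD) : Prop :=
  (∃ z : SD, ∃ i k, 1 ≤ i ∧ i ≤ n ∧ k + 1 < dx i ∧
    (z.1 i).symm k < (z.1 i).symm (k + 1) ∧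
    (rotPerm (dy (i - 1) + dx i) (z.2 i)).symm (dy (i - 1) + k)
      < (rotPerm (dy (i - 1) + dx i) (z.2 i)).symm (dy (i - 1) + k + 1) ∧
    u ∈ tripleX dx dy z i k ∧ u' ∈ tripleX dx dy z i k ∧ u ≠ u') ∨
  (∃ z : SD, ∃ i l, 1 ≤ i ∧ i + 1 ≤ n ∧ l + 1 < dy i ∧
    z.1 i l < z.1 i (l + 1) ∧
    z.2 (i + 1) (dx (i + 1) + l) < z.2 (i + 1) (dx (i + 1) + l + 1) ∧
    u ∈ tripleY dx dy z i l ∧ u' ∈ tripleY dx dy z i l ∧ u ≠ u')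

/-- The K-theoretic lacing diagram moves, at the level of extended lacing diagrams
(elements of `S_𝐝`): local moves at a middle column (`x_i` or `y_i`) through two
adjacent non-virtual middle dots, where the two strands through the middle dots are
uncrossed on both sides in the base configuration and at least one of their endpoints
in each outer column is non-virtual; any two of the three resulting configurations
(crossed left / crossed both / crossed right) are interchanged. -/
def KMoveRel (n : ℕ) (dx dy : ℕ → ℕ) (u u' : SD) : Prop :=
  (∃ z : SD, ∃ i k, 1 ≤ i ∧ i ≤ n ∧ k + 1 < dx i ∧
    (z.1 i).symm k < (z.1 i).symm (k + 1) ∧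
    (rotPerm (dy (i - 1) + dx i) (z.2 i)).symm (dy (i - 1) + k)
      < (rotPerm (dy (i - 1) + dx i) (z.2 i)).symm (dy (i - 1) + k + 1) ∧
    ((z.1 i).symm k < dy i ∨ (z.1 i).symm (k + 1) < dy i) ∧
    (dx i ≤ (rotPerm (dy (i - 1) + dx i) (z.2 i)).symm (dy (i - 1) + k) ∨
      dx i ≤ (rotPerm (dy (i - 1) + dx i) (z.2 i)).symm (dy (i - 1) + k + 1)) ∧
    u ∈ tripleX dx dy z i k ∧ u' ∈ tripleX dx dy z i k ∧ u ≠ u') ∨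
  (∃ z : SD, ∃ i l, 1 ≤ i ∧ i + 1 ≤ n ∧ l + 1 < dy i ∧
    z.1 i l < z.1 i (l + 1) ∧
    rotPerm (dy i + dx (i + 1)) (z.2 (i + 1)) (dx (i + 1) + l)
      < rotPerm (dy i + dx (i + 1)) (z.2 (i + 1)) (dx (i + 1) + l + 1) ∧
    (z.1 i l < dx i ∨ z.1 i (l + 1) < dx i) ∧
    (dy i ≤ rotPerm (dy i + dx (i + 1)) (z.2 (i + 1)) (dx (i + 1) + l) ∨
      dy i ≤ rotPerm (dy i + dx (i + 1)) (z.2 (i + 1)) (dx (i + 1) + l + 1)) ∧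
    u ∈ tripleY dx dy z i l ∧ u' ∈ tripleY dx dy z i l ∧ u ≠ u')

/-- Extended diagrams reachable from (the completion of) a minimal lacing diagram by
K-theoretic lacing diagram moves. -/
def KWext (n : ℕ) (dx dy : ℕ → ℕ) (L₀ : LaceData) : Set SD :=
  {x | ∃ w ∈ MinimalLacings n dx dy L₀,
    Relation.ReflTransGen (KMoveRel n dx dy) (cOp n dx dy w) x}

/-- `KW(Ω)`: the K-theoretic lacing diagrams for the orbit of `L₀`. -/
def KW (n : ℕ) (dx dy : ℕ → ℕ) (L₀ : LaceData) : Set LaceData :=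
  LDOp n dx dy '' KWext n dx dy L₀

end QP

namespace QP

/-! ### Alphabets and Schubert / Grothendieck polynomials. -/

/-- Index of the row block `y_j` containing row `r` (for `r < d_y`). -/
def yRowIdx (n : ℕ) (dy : ℕ → ℕ) (r : ℕ) : ℕ :=
  WithBot.unbotD 0 (((Finset.range (n + 1)).filter fun j => rowY dy j ≤ r).max)

/-- Index of the row block `x_k` containing row `r` (for `d_y ≤ r < d`). -/
def xRowIdx (n : ℕ) (dx dy : ℕ → ℕ) (r : ℕ) : ℕ :=
  WithTop.untopD 0 (((Finset.Icc 1 n).filter fun k => rowX n dx dy k ≤ r).min)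

/-- Index of the column block `x_k` containing column `c` (for `c < d_x`). -/
def xColIdx (n : ℕ) (dx : ℕ → ℕ) (c : ℕ) : ℕ :=
  WithTop.untopD 0 (((Finset.Icc 1 n).filter fun k => colX n dx k ≤ c).min)

/-- Index of the column block `y_j` containing column `c` (for `d_x ≤ c < d`). -/
def yColIdx (n : ℕ) (dx dy : ℕ → ℕ) (c : ℕ) : ℕ :=
  WithBot.unbotD 0 (((Finset.range (n + 1)).filter fun j => colY n dx dy j ≤ c).max)

variable {K : Type*}

/-- The variable attached to row `r` of the `d × d` grid: the concatenated alphabet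
`(𝐭, 𝐬) = (𝐭^0, …, 𝐭^n, 𝐬^n, …, 𝐬^1)`.  Here `t k i` is the variable `t^k_{i+1}`
and `s k j` is the variable `s^k_{j+1}`. -/
def rowVar [CommRing K] (n : ℕ) (dx dy : ℕ → ℕ) (t s : ℕ → ℕ → K) (r : ℕ) : K :=
  if r < dY n dy then t (yRowIdx n dy r) (r - rowY dy (yRowIdx n dy r))
  else s (xRowIdx n dx dy r) (r - rowX n dx dy (xRowIdx n dx dy r))

/-- The variable attached to column `c` of the `d × d` grid: the concatenated
alphabet `(𝐬, 𝐭) = (𝐬^n, …, 𝐬^1, 𝐭^0, …, 𝐭^n)`. -/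
def colVar [CommRing K] (n : ℕ) (dx dy : ℕ → ℕ) (t s : ℕ → ℕ → K) (c : ℕ) : K :=
  if c < dX n dx then s (xColIdx n dx c) (c - colX n dx (xColIdx n dx c))
  else t (yColIdx n dx dy c) (c - colY n dx dy (yColIdx n dx dy c))

/-- The double Schubert polynomial `𝔖_v(a; b)` (pipe dream formula, on a `k × l`
grid). -/
def schubert [CommRing K] (k l : ℕ) (v : Equiv.Perm ℕ) (a b : ℕ → K) : K :=
  ∑ P ∈ rpipesFin k l v, ∏ p ∈ P, (a p.1 - b p.2)

/-- The double Grothendieck polynomial `𝔊_v(a; b)` (pipe dream formula, on a `k × l`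
grid). -/
def grothendieck [Field K] (k l : ℕ) (v : Equiv.Perm ℕ) (a b : ℕ → K) : K :=
  ∑ P ∈ pipesFin k l v,
    (-1 : K) ^ ((P.card : ℤ) - (lenB (k + l) v : ℤ)) * ∏ p ∈ P, (1 - a p.1 / b p.2)

/-- `𝔖_𝐰(𝐭; 𝐬) = ∏_k 𝔖_{w_k}(𝐭^k; 𝐬^k) ⬝ ∏_k 𝔖_{rot(w^k)}(𝐭̃^{k-1}; 𝐬̃^k)` for a lacing
diagram `𝐰` (Schubert polynomials of partial permutations being those of their
minimal-length completions). -/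
def schubertLace [CommRing K] (n : ℕ) (dx dy : ℕ → ℕ) (w : LaceData)
    (t s : ℕ → ℕ → K) : K :=
  (∏ k ∈ Finset.Icc 1 n,
    schubert (dy k) (dx k) (completion (dy k) (dx k) (w.1 k))
      (fun i => t k i) (fun j => s k j)) *
  ∏ k ∈ Finset.Icc 1 n,
    schubert (dy (k - 1)) (dx k)
      (completion (dy (k - 1)) (dx k) (rotF (dy (k - 1)) (dx k) (w.2 k)))
      (fun i => t (k - 1) (dy (k - 1) - 1 - i)) (fun j => s k (dx k - 1 - j))

/-- `𝔊_𝐰(𝐭; 𝐬) = ∏_k 𝔊_{w_k}(𝐭^k; 𝐬^k) ⬝ ∏_k 𝔊_{rot(w^k)}(𝐭̃^{k-1}; 𝐬̃^k)`. -/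
def grothendieckLace [Field K] (n : ℕ) (dx dy : ℕ → ℕ) (w : LaceData)
    (t s : ℕ → ℕ → K) : K :=
  (∏ k ∈ Finset.Icc 1 n,
    grothendieck (dy k) (dx k) (completion (dy k) (dx k) (w.1 k))
      (fun i => t k i) (fun j => s k j)) *
  ∏ k ∈ Finset.Icc 1 n,
    grothendieck (dy (k - 1)) (dx k)
      (completion (dy (k - 1)) (dx k) (rotF (dy (k - 1)) (dx k) (w.2 k)))
      (fun i => t (k - 1) (dy (k - 1) - 1 - i)) (fun j => s k (dx k - 1 - j))

/-! ### Data for the Demazure-product factorization of the Zelevinsky permutation. -/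

/-- `ε^k`: Demazure product of the pipe dream with crosses at all positions strictly
north of the block `α_k`. -/
def epsA (n : ℕ) (dx dy : ℕ → ℕ) (k : ℕ) : Equiv.Perm ℕ :=
  demazure (dY n dy) (dX n dx)
    (Finset.range (rowY dy (k - 1)) ×ˢ Finset.Ico (colX n dx k) (colX n dx k + dx k))

/-- `ε_k`: Demazure product of the pipe dream with crosses at all positions strictly
south of the block `β_k` (inside the `d_y × d_x` grid). -/
def epsB (n : ℕ) (dx dy : ℕ → ℕ) (k : ℕ) : Equiv.Perm ℕ :=
  demazure (dY n dy) (dX n dx)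
    (Finset.Ico (rowY dy k + dy k) (dY n dy) ×ˢ Finset.Ico (colX n dx k) (colX n dx k + dx k))

/-- `θ^k`: Demazure product of the pipe dream with crosses at all positions strictly
west of the block `α_k`. -/
def thA (n : ℕ) (dx dy : ℕ → ℕ) (k : ℕ) : Equiv.Perm ℕ :=
  demazure (dY n dy) (dX n dx)
    (Finset.Ico (rowY dy (k - 1)) (rowY dy (k - 1) + dy (k - 1)) ×ˢ Finset.range (colX n dx k))

/-- `θ_k`: Demazure product of the pipe dream with crosses at all positions strictly
east of the block `β_k` (inside the `d_y × d_x` grid). -/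
def thB (n : ℕ) (dx dy : ℕ → ℕ) (k : ℕ) : Equiv.Perm ℕ :=
  demazure (dY n dy) (dX n dx)
    (Finset.Ico (rowY dy k) (rowY dy k + dy k) ×ˢ Finset.Ico (colX n dx k + dx k) (dX n dx))

/-- `a_k = Σ_{i>k} dx i + Σ_{i<k-1} dy i`. -/
def aOff (n : ℕ) (dx dy : ℕ → ℕ) (k : ℕ) : ℕ := colX n dx k + rowY dy (k - 1)

/-- `b_k = Σ_{i>k} dx i + Σ_{i<k} dy i`. -/
def bOff (n : ℕ) (dx dy : ℕ → ℕ) (k : ℕ) : ℕ := colX n dx k + rowY dy k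

/-- `w_k = 1^{b_k} × v_k`. -/
def wShB (n : ℕ) (dx dy : ℕ → ℕ) (x : SD) (k : ℕ) : Equiv.Perm ℕ :=
  shiftPerm (bOff n dx dy k) (x.1 k)

/-- `w^k = 1^{a_k} × rot((v^k)⁻¹)`. -/
def wShA (n : ℕ) (dx dy : ℕ → ℕ) (x : SD) (k : ℕ) : Equiv.Perm ℕ :=
  shiftPerm (aOff n dx dy k) (rotPerm (dy (k - 1) + dx k) (x.2 k)⁻¹)

/-- The factor list `(w^1 w_1 ε_1)(ε^2 w^2 w_2 ε_2) ⋯ (ε^n w^n w_n)` (the factors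
`ε^1` and `ε_n` being the identity). -/
def factorList2 (n : ℕ) (dx dy : ℕ → ℕ) (x : SD) : List (Equiv.Perm ℕ) :=
  ((List.range' 1 n).map fun k =>
    [epsA n dx dy k, wShA n dx dy x k, wShB n dx dy x k, epsB n dx dy k]).flatten

/-- The factor list `(w^1 θ^1)(w_1 w^2 θ^2)(θ_2 w_2 w^3 θ^3) ⋯ (θ_{n-1} w_{n-1} w^n)(θ_n w_n)`
(the factor `θ_1` being the identity). -/
def factorList3 (n : ℕ) (dx dy : ℕ → ℕ) (x : SD) : List (Equiv.Perm ℕ) :=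
  [wShA n dx dy x 1, thA n dx dy 1] ++
    ((List.range' 1 n).map fun k =>
      [thB n dx dy k, wShB n dx dy x k] ++
        (if k = n then [] else [wShA n dx dy x (k + 1), thA n dx dy (k + 1)])).flatten

end QP

/-! A tile `(i, j)` of `P_*` in the column block `x_k` lies either north of `α_k` or south of
`β_k`. By (Z1) and (Z2), the 1s of a block row of `v(Ω)` sit in the block columns of the
vertices from its left neighbour onwards. So every row north of the row block `y_{k-1}` has
its 1 in the column block `x_{k-1}` or further east, and every row of `x_k, …, x_1` has its 1
west of the end of the column block `y_k`. Reading `δ(P)` off the rows one at a time, the first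
bound forces every tile north of `α_k` and west of its east edge to be a cross. South of the
`β`-blocks, the lexicographically last missing tile `(t, js)` would make `δ(P)` send
`d_y + js` to `d_x + t`, contradicting the second bound. -/

namespace QP

section HeckeWords

lemma foldl_hstep_eq_mul (l : List ℕ) (u : Equiv.Perm ℕ) :
    ∃ σ : Equiv.Perm ℕ, l.foldl hstep u = u * σ ∧
      ∀ p, (∀ a ∈ l, p ≠ a ∧ p ≠ a + 1) → σ p = p := by
  induction l generalizing u with
  | nil => exact ⟨1, (mul_one u).symm, fun _ _ => rfl⟩
  | cons a l ih =>
    obtain ⟨τ, hτ, hτfix⟩ : ∃ τ : Equiv.Perm ℕ, hstep u a = u * τ ∧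
        ∀ p, p ≠ a → p ≠ a + 1 → τ p = p := by
      unfold hstep
      split_ifs
      · exact ⟨_, rfl, fun p h₁ h₂ => Equiv.swap_apply_of_ne_of_ne h₁ h₂⟩
      · exact ⟨1, (mul_one u).symm, fun _ _ _ => rfl⟩
    obtain ⟨σ, hσ, hσfix⟩ := ih (hstep u a)
    refine ⟨τ * σ, by rw [List.foldl_cons, hσ, hτ, mul_assoc], fun p hp => ?_⟩
    obtain ⟨ha, ha'⟩ := hp a List.mem_cons_self
    rw [Equiv.Perm.mul_apply, hσfix p fun b hb => hp b (List.mem_cons_of_mem a hb),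
      hτfix p ha ha']

lemma foldl_hstep_apply_of_forall_ne {l : List ℕ} {p : ℕ} (h : ∀ a ∈ l, p ≠ a ∧ p ≠ a + 1)
    (u : Equiv.Perm ℕ) : l.foldl hstep u p = u p := by
  obtain ⟨σ, hσ, hσfix⟩ := foldl_hstep_eq_mul l u
  rw [hσ, Equiv.Perm.mul_apply, hσfix p h]

lemma mem_of_apply_mem_of_fixed {α : Type*} {σ : Equiv.Perm α} {S : α → Prop}
    (hS : ∀ p, S p → σ p = p) {p : α} (hp : S (σ p)) : S p := by
  rwa [← σ.injective (hS _ hp)]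

lemma foldl_hstep_range'_reverse (s C : ℕ) (u : Equiv.Perm ℕ)
    (hu : ∀ i < C, u (s + i) < u (s + C)) :
    (List.range' s C).reverse.foldl hstep u s = u (s + C) ∧
      ∀ i < C, (List.range' s C).reverse.foldl hstep u (s + i + 1) = u (s + i) := by
  induction C generalizing u with
  | zero => exact ⟨rfl, fun i hi => absurd hi (Nat.not_lt_zero i)⟩
  | succ C ih =>
    have hasc : u (s + C) < u (s + C + 1) := hu C C.lt_succ_self
    set u₁ := u * Equiv.swap (s + C) (s + C + 1)
    have hstep_eq : hstep u (s + C) = u₁ := if_pos hasc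
    have hu₁ : ∀ i < C, u₁ (s + i) = u (s + i) := fun i hi => by
      rw [Equiv.Perm.mul_apply, Equiv.swap_apply_of_ne_of_ne (by omega) (by omega)]
    have hu₁C : u₁ (s + C) = u (s + C + 1) := by
      rw [Equiv.Perm.mul_apply, Equiv.swap_apply_left]
    have hu₁C' : u₁ (s + C + 1) = u (s + C) := by
      rw [Equiv.Perm.mul_apply, Equiv.swap_apply_right]
    obtain ⟨ih₀, ih₁⟩ := ih u₁ fun i hi => by
      rw [hu₁ i hi, hu₁C]; exact hu i (by omega)
    have hword : (List.range' s (C + 1)).reverse.foldl hstep u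
        = (List.range' s C).reverse.foldl hstep u₁ := by
      rw [List.range'_concat, List.reverse_append]
      simp [hstep_eq]
    rw [hword]
    refine ⟨by rw [ih₀, hu₁C]; rfl, fun i hi => ?_⟩
    rcases Nat.lt_succ_iff_lt_or_eq.mp hi with hi | rfl
    · rw [ih₁ i hi, hu₁ i hi]
    · rw [foldl_hstep_apply_of_forall_ne, hu₁C']
      intro a ha
      rw [List.mem_reverse, List.mem_range'_1] at ha
      omega

end HeckeWords

section RowWords

variable {P : Finset (ℕ × ℕ)}

def rowSegment (P : Finset (ℕ × ℕ)) (r : ℕ) (cols : List ℕ) : List ℕ :=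
  cols.filterMap fun j => if (r, j) ∈ P then some (r + j) else none

def rowWord (P : Finset (ℕ × ℕ)) (d r : ℕ) : List ℕ := rowSegment P r (List.range d).reverse

def demazureRows (P : Finset (ℕ × ℕ)) (d t : ℕ) : Equiv.Perm ℕ :=
  hword ((List.range t).flatMap (rowWord P d))

lemma mem_rowSegment {r a : ℕ} {cols : List ℕ} :
    a ∈ rowSegment P r cols ↔ ∃ j ∈ cols, (r, j) ∈ P ∧ r + j = a := by
  simp [rowSegment, List.mem_filterMap]

lemma rowSegment_append (r : ℕ) (l l' : List ℕ) :
    rowSegment P r (l ++ l') = rowSegment P r l ++ rowSegment P r l' :=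
  List.filterMap_append

lemma rowSegment_range'_reverse_of_full {r c m : ℕ} (h : ∀ j, c ≤ j → j < c + m → (r, j) ∈ P) :
    rowSegment P r (List.range' c m).reverse = (List.range' (r + c) m).reverse := by
  rw [rowSegment, List.filterMap_congr (g := some ∘ (r + ·)), List.filterMap_eq_map,
    List.map_reverse, List.map_add_range']
  intro j hj
  rw [List.mem_reverse, List.mem_range'_1] at hj
  simp [h j hj.1 hj.2]

lemma rowSegment_range_reverse_of_full {r c : ℕ} (h : ∀ j < c, (r, j) ∈ P) :
    rowSegment P r (List.range c).reverse = (List.range' r c).reverse := by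
  rw [List.range_eq_range', rowSegment_range'_reverse_of_full fun j _ hj => h j (by omega),
    Nat.add_zero]

lemma range_reverse_eq_append {c d : ℕ} (h : c ≤ d) :
    (List.range d).reverse = (List.range' c (d - c)).reverse ++ (List.range c).reverse := by
  obtain ⟨m, rfl⟩ := Nat.exists_eq_add_of_le h
  rw [← List.reverse_append, List.range_eq_range', List.range_eq_range', Nat.add_sub_cancel_left]
  simpa using (List.range'_append_1 (s := 0) (m := c) (n := m)).symm

lemma rowWord_eq_append {d r c : ℕ} (hc : c ≤ d) :
    rowWord P d r = rowSegment P r (List.range' c (d - c)).reverse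
      ++ rowSegment P r (List.range c).reverse := by
  rw [rowWord, range_reverse_eq_append hc, rowSegment_append]

lemma mem_rowWord {d r a : ℕ} : a ∈ rowWord P d r ↔ ∃ j < d, (r, j) ∈ P ∧ r + j = a := by
  simp [rowWord, mem_rowSegment]

lemma demazure_eq_demazureRows (d : ℕ) : demazure d d P = demazureRows P d d := rfl

lemma demazureRows_zero (d : ℕ) : demazureRows P d 0 = 1 := rfl

lemma demazureRows_succ (d t : ℕ) :
    demazureRows P d (t + 1) = (rowWord P d t).foldl hstep (demazureRows P d t) := by
  simp [demazureRows, hword, List.range_succ, List.flatMap_append, List.foldl_append]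

lemma demazureRows_apply_of_le {d t t' p : ℕ} (htt' : t ≤ t')
    (h : ∀ r, t ≤ r → r < t' → ∀ a ∈ rowWord P d r, p ≠ a ∧ p ≠ a + 1) :
    demazureRows P d t' p = demazureRows P d t p := by
  induction t', htt' using Nat.le_induction with
  | base => rfl
  | succ t' htt' ih =>
    rw [demazureRows_succ, foldl_hstep_apply_of_forall_ne (h t' htt' t'.lt_succ_self),
      ih fun r hr hr' => h r hr (by omega)]

end RowWords

section NorthwestRectangles

variable {P : Finset (ℕ × ℕ)}

lemma demazureRows_succ_of_full_prefix {d t c : ℕ} (hc : c ≤ d) (hfull : ∀ j < c, (t, j) ∈ P)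
    (hinv : ∀ i < c, demazureRows P d t (t + i) = i) :
    (∀ i < c, demazureRows P d (t + 1) (t + 1 + i) = i) ∧
      ∃ q, t + c ≤ q ∧ ((t, c) ∉ P → q = t + c) ∧
        demazureRows P d (t + 1) t = demazureRows P d t q := by
  set u := demazureRows P d t
  set east := rowSegment P t (List.range' c (d - c)).reverse
  have heast : ∀ a ∈ east, t + c ≤ a ∧ (a = t + c → (t, c) ∈ P) := by
    intro a ha
    obtain ⟨j, hj, hjP, rfl⟩ := mem_rowSegment.mp ha
    rw [List.mem_reverse, List.mem_range'_1] at hj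
    exact ⟨by omega, fun h => by rwa [show j = c by omega] at hjP⟩
  obtain ⟨σ, hσ, hσfix⟩ := foldl_hstep_eq_mul east u
  have hσlow : ∀ p < t + c, σ p = p := fun p hp =>
    hσfix p fun a ha => by have := heast a ha; omega
  have hq : t + c ≤ σ (t + c) :=
    le_of_not_gt fun h => (mem_of_apply_mem_of_fixed hσlow h).false
  have hqc : (t, c) ∉ P → σ (t + c) = t + c := fun hmiss =>
    hσfix _ fun a ha => by
      obtain ⟨h₁, h₂⟩ := heast a ha
      exact ⟨fun h => hmiss (h₂ h.symm), by omega⟩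
  have hval : ∀ i < c, (u * σ) (t + i) = i := fun i hi => by
    rw [Equiv.Perm.mul_apply, hσlow _ (by omega), hinv i hi]
  have htop : c ≤ (u * σ) (t + c) := by
    by_contra! h
    have := u.injective ((hinv _ h).trans (Equiv.Perm.mul_apply u σ (t + c)).symm)
    omega
  obtain ⟨hrun₀, hrun₁⟩ := foldl_hstep_range'_reverse t c (u * σ) fun i hi => by
    rw [hval i hi]; omega
  have hnext : demazureRows P d (t + 1) = (List.range' t c).reverse.foldl hstep (u * σ) := by
    rw [demazureRows_succ, rowWord_eq_append hc, List.foldl_append, ← hσ,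
      rowSegment_range_reverse_of_full hfull]
  refine ⟨fun i hi => ?_, σ (t + c), hq, hqc, ?_⟩
  · rw [hnext, show t + 1 + i = t + i + 1 by omega, hrun₁ i hi, hval i hi]
  · rw [hnext, hrun₀, Equiv.Perm.mul_apply]

theorem mem_of_le_demazure {d R C : ℕ} (hR : R ≤ d) (hC : C ≤ d)
    (hδ : ∀ i < R, C ≤ demazure d d P i) : ∀ i < R, ∀ j < C, (i, j) ∈ P := by
  suffices h : ∀ t ≤ R,
      (∀ i < t, ∀ j < C, (i, j) ∈ P) ∧ ∀ i < C, demazureRows P d t (t + i) = i from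
    (h R le_rfl).1
  intro t
  induction t with
  | zero =>
    exact fun _ => ⟨fun i hi => absurd hi i.not_lt_zero, fun i _ => by simp [demazureRows_zero]⟩
  | succ t ih =>
    intro ht
    obtain ⟨hrows, hinv⟩ := ih (by omega)
    have hrow : ∀ j < C, (t, j) ∈ P := by
      by_contra! hmiss
      have hex : ∃ j, j < C ∧ (t, j) ∉ P := hmiss
      set js := Nat.find hex
      obtain ⟨hjsC, hjsP⟩ := Nat.find_spec hex
      have hbefore : ∀ j < js, (t, j) ∈ P := fun j hj => by
        by_contra hjP
        exact Nat.find_min hex hj ⟨by omega, hjP⟩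
      obtain ⟨-, q, -, hq, hnext⟩ := demazureRows_succ_of_full_prefix (by omega) hbefore
        fun i hi => hinv i (by omega)
      have hlater : demazure d d P t = demazureRows P d (t + 1) t := by
        rw [demazure_eq_demazureRows]
        refine demazureRows_apply_of_le (by omega) fun r hr _ a ha => ?_
        obtain ⟨j, -, -, rfl⟩ := mem_rowWord.mp ha
        omega
      have := hδ t (by omega)
      rw [hlater, hnext, hq hjsP, hinv js hjsC] at this
      omega
    refine ⟨fun i hi j hj => ?_, (demazureRows_succ_of_full_prefix hC hrow hinv).1⟩
    rcases Nat.lt_succ_iff_lt_or_eq.mp hi with hi | rfl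
    · exact hrows i hi j hj
    · exact hrow j hj

end NorthwestRectangles

section SoutheastRegions

variable {P : Finset (ℕ × ℕ)} {d DX : ℕ}

lemma demazureRows_apply_of_add_le (hrect : ∀ p ∈ P, p.2 < DX) {r p : ℕ} (hp : r + DX ≤ p) :
    demazureRows P d r p = p := by
  rw [demazureRows_apply_of_le (t := 0) (Nat.zero_le r), demazureRows_zero, Equiv.Perm.one_apply]
  intro r' _ hr' a ha
  obtain ⟨j, -, hjP, rfl⟩ := mem_rowWord.mp ha
  have := hrect _ hjP
  dsimp only at this
  omega

lemma demazureRows_apply_lt (hrect : ∀ p ∈ P, p.2 < DX) {r p : ℕ} (hp : p < r + DX) :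
    demazureRows P d r p < r + DX :=
  lt_of_not_ge fun h => (not_le.mpr hp) (mem_of_apply_mem_of_fixed (S := (r + DX ≤ ·))
    (fun _ => demazureRows_apply_of_add_le hrect) h)

lemma demazureRows_succ_eq_foldl (hrect : ∀ p ∈ P, p.2 < DX) (hDX : DX ≤ d) {r c : ℕ} (hc : c ≤ DX)
    (hfull : ∀ j, c ≤ j → j < DX → (r, j) ∈ P) :
    demazureRows P d (r + 1) = (rowSegment P r (List.range c).reverse).foldl hstep
      ((List.range' (r + c) (DX - c)).reverse.foldl hstep (demazureRows P d r)) := by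
  have hbeyond : rowSegment P r (List.range' DX (d - DX)).reverse = [] :=
    List.filterMap_eq_nil_iff.mpr fun j hj => by
      have : (r, j) ∉ P := fun h => by
        have := hrect _ h
        rw [List.mem_reverse, List.mem_range'_1] at hj
        dsimp only at this
        omega
      simp [this]
  rw [demazureRows_succ, rowWord_eq_append hDX, hbeyond, List.nil_append,
    range_reverse_eq_append hc, rowSegment_append,
    rowSegment_range'_reverse_of_full fun j hj hj' => hfull j hj (by omega),
    List.foldl_append]

lemma foldl_run_demazureRows (hrect : ∀ p ∈ P, p.2 < DX) {r c : ℕ} (hc : c ≤ DX) :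
    (List.range' (r + c) (DX - c)).reverse.foldl hstep (demazureRows P d r) (r + c) = r + DX ∧
      ∀ i < DX - c, (List.range' (r + c) (DX - c)).reverse.foldl hstep (demazureRows P d r)
        (r + c + i + 1) = demazureRows P d r (r + c + i) := by
  have htop : r + c + (DX - c) = r + DX := by omega
  obtain ⟨h₀, h₁⟩ :=
      foldl_hstep_range'_reverse (r + c) (DX - c) (demazureRows P d r) fun i hi => by
    rw [htop, demazureRows_apply_of_add_le hrect le_rfl]
    exact demazureRows_apply_lt hrect (by omega)
  rw [htop, demazureRows_apply_of_add_le hrect le_rfl] at h₀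
  exact ⟨h₀, h₁⟩

lemma demazureRows_succ_apply_of_gap (hrect : ∀ p ∈ P, p.2 < DX) (hDX : DX ≤ d) {r js : ℕ}
    (hjs : js < DX) (hmiss : (r, js) ∉ P) (hfull : ∀ j, js < j → j < DX → (r, j) ∈ P) :
    demazureRows P d (r + 1) (r + js + 1) = r + DX := by
  rw [demazureRows_succ_eq_foldl hrect hDX (c := js + 1) hjs fun j hj hj' => hfull j hj hj',
    foldl_hstep_apply_of_forall_ne]
  · exact (foldl_run_demazureRows hrect (c := js + 1) hjs).1
  intro a ha
  obtain ⟨j, hj, hjP, rfl⟩ := mem_rowSegment.mp ha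
  rw [List.mem_reverse, List.mem_range] at hj
  have : j ≠ js := fun h => hmiss (h ▸ hjP)
  omega

lemma demazureRows_succ_apply_of_full (hrect : ∀ p ∈ P, p.2 < DX) (hDX : DX ≤ d) {r js : ℕ}
    (hjs : js < DX) (hfull : ∀ j, js ≤ j → j < DX → (r, j) ∈ P) :
    demazureRows P d (r + 1) (r + js + 1) = demazureRows P d r (r + js) := by
  have hrun := (foldl_run_demazureRows hrect (d := d) (r := r) hjs.le).2 0 (by omega)
  simp only [Nat.add_zero] at hrun
  rw [demazureRows_succ_eq_foldl hrect hDX hjs.le hfull, foldl_hstep_apply_of_forall_ne, hrun]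
  intro a ha
  obtain ⟨j, hj, -, rfl⟩ := mem_rowSegment.mp ha
  rw [List.mem_reverse, List.mem_range] at hj
  omega

theorem demazure_apply_of_missing {DY : ℕ} (hrect : ∀ p ∈ P, p.1 < DY ∧ p.2 < DX) (hDY : DY ≤ d)
    (hDX : DX ≤ d) {t js : ℕ} (ht : t < DY) (hjs : js < DX) (hmiss : (t, js) ∉ P)
    (hrow : ∀ j, js < j → j < DX → (t, j) ∈ P)
    (hsouth : ∀ r, t < r → r < DY → ∀ j, js ≤ j → j < DX → (r, j) ∈ P) :
    demazure d d P (DY + js) = t + DX := by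
  have hrect₂ : ∀ p ∈ P, p.2 < DX := fun p hp => (hrect p hp).2
  have hinv : ∀ r, t + 1 ≤ r → r ≤ DY → demazureRows P d r (r + js) = t + DX := by
    intro r hr
    induction r, hr using Nat.le_induction with
    | base =>
      intro _
      rw [add_right_comm]
      exact demazureRows_succ_apply_of_gap hrect₂ hDX hjs hmiss hrow
    | succ r hr ih =>
      intro hrDY
      rw [show r + 1 + js = r + js + 1 by omega, demazureRows_succ_apply_of_full hrect₂ hDX hjs
        (hsouth r (by omega) (by omega)), ih (by omega)]
  rw [demazure_eq_demazureRows, demazureRows_apply_of_le hDY, hinv DY (by omega) le_rfl]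
  intro r hr _ a ha
  obtain ⟨j, -, hjP, -⟩ := mem_rowWord.mp ha
  exact absurd (hrect _ hjP).1 (by dsimp only; omega)

/-- Otherwise the lexicographically last tile of `S` missing from `P` contradicts
`demazure_apply_of_missing`. -/
theorem mem_of_isUpperSet {DY : ℕ} (hrect : ∀ p ∈ P, p.1 < DY ∧ p.2 < DX) (hDY : DY ≤ d)
    (hDX : DX ≤ d) {S : Set (ℕ × ℕ)} (hS : IsUpperSet S)
    (hδ : ∀ t < DY, ∀ js < DX, (t, js) ∈ S → demazure d d P (DY + js) ≠ t + DX) :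
    ∀ t < DY, ∀ js < DX, (t, js) ∈ S → (t, js) ∈ P := by
  intro t ht js hjs htS
  by_contra htP
  set M := ((Finset.range DY ×ˢ Finset.range DX).filter (· ∈ S)) \ P
  have hmem : ∀ {r j}, r < DY → j < DX → (r, j) ∈ S → (r, j) ∉ P → (r, j) ∈ M := by
    intro r j hr hj hrS hP
    simp [M, hr, hj, hrS, hP]
  obtain ⟨⟨t', js'⟩, hM, hmax⟩ := M.exists_max_image toLex ⟨_, hmem ht hjs htS htP⟩
  simp only [M, Finset.mem_sdiff, Finset.mem_filter, Finset.mem_product, Finset.mem_range] at hM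
  obtain ⟨⟨⟨ht', hjs'⟩, hS'⟩, hP'⟩ := hM
  have hlast : ∀ r j, t' ≤ r → js' ≤ j → (t' < r ∨ js' < j) → r < DY → j < DX → (r, j) ∈ P := by
    intro r j hr hj hlt hrDY hjDX
    by_contra hP
    have := hmax _ (hmem hrDY hjDX (hS (Prod.mk_le_mk.mpr ⟨hr, hj⟩) hS') hP)
    rw [Prod.Lex.toLex_le_toLex] at this
    dsimp only at this
    omega
  exact hδ t' ht' js' hjs' hS' (demazure_apply_of_missing hrect hDY hDX ht' hjs' hP'
    (fun j hj hjDX => hlast t' j le_rfl hj.le (Or.inr hj) ht' hjDX)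
    (fun r hr hrDY j hj hjDX => hlast r j hr.le hj (Or.inl hr) hrDY hjDX))

end SoutheastRegions

section BlockOffsets

variable {n : ℕ} {dx dy : ℕ → ℕ}

lemma rowY_mono (dy : ℕ → ℕ) : Monotone (rowY dy) := fun _ _ h =>
  Finset.sum_le_sum_of_subset (Finset.range_subset_range.mpr h)

lemma rowY_succ (dy : ℕ → ℕ) (j : ℕ) : rowY dy (j + 1) = rowY dy j + dy j :=
  Finset.sum_range_succ _ _

lemma colX_antitone (n : ℕ) (dx : ℕ → ℕ) : Antitone (colX n dx) := fun _ _ h =>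
  Finset.sum_le_sum_of_subset (Finset.Icc_subset_Icc (by omega) le_rfl)

lemma colX_of_le {k : ℕ} (h : n ≤ k) : colX n dx k = 0 := by
  simp [colX, Finset.Icc_eq_empty_of_lt (Nat.lt_succ_of_le h)]

lemma colX_le_dX (k : ℕ) : colX n dx k ≤ dX n dx := colX_antitone n dx k.zero_le

lemma colX_add_self {k : ℕ} (hk : 1 ≤ k) (hkn : k ≤ n) :
    colX n dx k + dx k = colX n dx (k - 1) := by
  rw [colX, colX, Nat.sub_add_cancel hk, Finset.Icc_eq_cons_Ioc hkn, Finset.sum_cons,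
    ← Finset.Icc_add_one_left_eq_Ioc, add_comm]

lemma exists_rowY_block {M i : ℕ} (hi : i < rowY dy M) :
    ∃ m < M, rowY dy m ≤ i ∧ i < rowY dy (m + 1) := by
  obtain ⟨M, rfl⟩ : ∃ M', M = M' + 1 := Nat.exists_eq_add_one.mpr <| Nat.pos_of_ne_zero
    fun h => by simp [h, rowY] at hi
  have hex : ∃ m, i < rowY dy (m + 1) := ⟨M, hi⟩
  refine ⟨Nat.find hex, Nat.lt_succ_of_le (Nat.find_min' hex hi), ?_, Nat.find_spec hex⟩
  rcases h : Nat.find hex with _ | m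
  · simp [rowY]
  · exact not_lt.mp (Nat.find_min hex (by omega : m < Nat.find hex))

lemma exists_colX_block {j : ℕ} (hj : j < dX n dx) :
    ∃ k, 1 ≤ k ∧ k ≤ n ∧ colX n dx k ≤ j ∧ j < colX n dx (k - 1) := by
  have hex : ∃ k, colX n dx k ≤ j := ⟨n, by rw [colX_of_le le_rfl]; exact j.zero_le⟩
  have hpos : Nat.find hex ≠ 0 := fun h => by
    have := Nat.find_spec hex
    rw [h] at this
    exact absurd hj (not_lt.mpr this)
  exact ⟨Nat.find hex, Nat.one_le_iff_ne_zero.mpr hpos,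
    Nat.find_min' hex (by rw [colX_of_le le_rfl]; exact j.zero_le), Nat.find_spec hex,
    not_le.mp (Nat.find_min hex (by omega))⟩

end BlockOffsets

section LaceCounts

variable {n : ℕ} {dx dy : ℕ → ℕ} {L : LaceData}

lemma card_vertRowBlock (p : ℕ) : (vertRowBlock n dx dy p).card = colSize n dx dy p := by
  unfold vertRowBlock colSize
  split_ifs <;> simp

lemma matchingAt_fst_lt (hL : IsLacingDiagram n dx dy L) {p : ℕ} (hp : 1 ≤ p)
    (hp' : p + 1 ≤ 2 * n + 1) : ∀ q ∈ matchingAt n dx dy L p, q.1 < colSize n dx dy p := by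
  intro q hq
  unfold matchingAt at hq
  unfold colSize
  split_ifs at hq ⊢ with hodd
  · exact ((hL.1 _ (by omega) (by omega)).1.1 q hq).1
  · obtain ⟨⟨a, b⟩, hab, rfl⟩ := Finset.mem_image.mp hq
    exact ((hL.1 _ (by omega) (by omega)).2.1 _ hab).2

lemma pathCount_self {p : ℕ} (hp : 1 ≤ p) (hp' : p ≤ 2 * n + 1) :
    pathCount n dx dy L p p = colSize n dx dy p := by
  rw [pathCount, if_pos ⟨hp, le_rfl, hp'⟩, Nat.sub_self, pathF,
    Finset.card_image_of_injective _ fun a b h => congrArg Prod.fst h, Finset.card_range]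

lemma pathCount_succ (hL : IsLacingDiagram n dx dy L) {p : ℕ} (hp : 1 ≤ p)
    (hp' : p + 1 ≤ 2 * n + 1) :
    pathCount n dx dy L p (p + 1) = (matchingAt n dx dy L p).card := by
  rw [pathCount, if_pos ⟨hp, by omega, hp'⟩, Nat.add_sub_cancel_left, pathF, pathF]
  congr 1
  ext ⟨a, b⟩
  simp only [compF, Finset.mem_image, Finset.mem_filter, Finset.mem_product, Finset.mem_range,
    Prod.exists, Prod.mk.injEq, Nat.add_zero]
  constructor
  · rintro ⟨_, _, c, _, ⟨⟨⟨i, -, rfl, rfl⟩, hm⟩, rfl⟩, rfl, rfl⟩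
    exact hm
  · intro hm
    exact ⟨a, a, a, b, ⟨⟨⟨a, matchingAt_fst_lt hL hp hp' _ hm, rfl, rfl⟩, hm⟩, rfl⟩, rfl, rfl⟩

lemma pathCount_of_gt {u v : ℕ} (hv : 2 * n + 1 < v) : pathCount n dx dy L u v = 0 :=
  if_neg (by omega)

lemma sum_laceCount {pu : ℕ} (hpu : 1 ≤ pu) (hpu' : pu ≤ 2 * n + 1) :
    ∑ p ∈ Finset.Icc pu (2 * n + 1), laceCount n dx dy L pu p
      = (colSize n dx dy pu : ℤ) - pathCount n dx dy L (pu - 1) pu := by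
  set g : ℕ → ℤ := fun i =>
    (pathCount n dx dy L pu (pu + i) : ℤ) - pathCount n dx dy L (pu - 1) (pu + i)
  have hterm : ∀ i, laceCount n dx dy L pu (pu + i) = g i - g (i + 1) := fun i => by
    simp only [laceCount, g, add_assoc]
    ring
  rw [← Finset.Ico_add_one_right_eq_Icc, Finset.sum_Ico_eq_sum_range,
    Finset.sum_congr rfl fun i _ => hterm i, Finset.sum_range_sub']
  simp only [g, Nat.add_zero, pathCount_self hpu hpu',
    pathCount_of_gt (show 2 * n + 1 < pu + (2 * n + 1 + 1 - pu) by omega)]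
  ring

end LaceCounts

section ZelevinskyBlocks

variable {n : ℕ} {dx dy : ℕ → ℕ} {L : LaceData} {v : Equiv.Perm ℕ}

lemma mem_vertColBlock_of_even {p c : ℕ} (hp : p % 2 = 0) (hp' : 1 ≤ p) (hp'' : p ≤ 2 * n + 1)
    (hc : c ∈ vertColBlock n dx dy p) :
    colX n dx (n - p / 2 + 1) ≤ c ∧ c < colX n dx (n - p / 2) := by
  rw [vertColBlock, if_neg (by omega), Finset.mem_Ico,
    colX_add_self (by omega) (by omega), Nat.add_sub_cancel] at hc
  exact hc

lemma mem_vertColBlock_of_odd {p c : ℕ} (hp : p % 2 = 1) (hc : c ∈ vertColBlock n dx dy p) :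
    colY n dx dy (n - p / 2) ≤ c ∧ c < colY n dx dy (n - p / 2 + 1) := by
  rw [vertColBlock, if_pos hp, Finset.mem_Ico, show (p - 1) / 2 = p / 2 by omega] at hc
  simp only [colY, rowY_succ] at hc ⊢
  omega

lemma vertColBlock_disjoint {p q : ℕ} (hp : 1 ≤ p) (hp' : p ≤ 2 * n + 1) (hq : 1 ≤ q)
    (hq' : q ≤ 2 * n + 1) (hpq : p ≠ q) :
    Disjoint (vertColBlock n dx dy p) (vertColBlock n dx dy q) := by
  rw [Finset.disjoint_left]
  intro c hcp hcq
  have hX := colX_antitone n dx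
  have hY := rowY_mono dy
  rcases Nat.mod_two_eq_zero_or_one p with hp2 | hp2 <;>
    rcases Nat.mod_two_eq_zero_or_one q with hq2 | hq2
  · have := mem_vertColBlock_of_even hp2 hp hp' hcp
    have := mem_vertColBlock_of_even hq2 hq hq' hcq
    rcases lt_or_gt_of_ne (show n - p / 2 ≠ n - q / 2 by omega) with h | h
    · have := hX (show n - p / 2 + 1 ≤ n - q / 2 by omega); omega
    · have := hX (show n - q / 2 + 1 ≤ n - p / 2 by omega); omega
  · have := mem_vertColBlock_of_even hp2 hp hp' hcp
    have := mem_vertColBlock_of_odd (n := n) (dx := dx) (dy := dy) hq2 hcq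
    have := colX_le_dX (n := n) (dx := dx) (n - p / 2)
    simp only [colY] at *; omega
  · have := mem_vertColBlock_of_odd (n := n) (dx := dx) (dy := dy) hp2 hcp
    have := mem_vertColBlock_of_even hq2 hq hq' hcq
    have := colX_le_dX (n := n) (dx := dx) (n - q / 2)
    simp only [colY] at *; omega
  · have := mem_vertColBlock_of_odd (n := n) (dx := dx) (dy := dy) hp2 hcp
    have := mem_vertColBlock_of_odd (n := n) (dx := dx) (dy := dy) hq2 hcq
    simp only [colY] at *
    rcases lt_or_gt_of_ne (show n - p / 2 ≠ n - q / 2 by omega) with h | h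
    · have := hY (show n - p / 2 + 1 ≤ n - q / 2 by omega); omega
    · have := hY (show n - q / 2 + 1 ≤ n - p / 2 by omega); omega

lemma exists_mem_of_sum_onesIn_eq_card {R A : Finset ℕ} {C : ℕ → Finset ℕ}
    (hdisj : (A : Set ℕ).PairwiseDisjoint C) (hsum : ∑ p ∈ A, onesIn v R (C p) = R.card) :
    ∀ i ∈ R, ∃ p ∈ A, v i ∈ C p := by
  have hcard : (R.filter fun i => v i ∈ A.biUnion C).card = R.card := by
    have hunion : (R.filter fun i => v i ∈ A.biUnion C)
        = A.biUnion fun p => R.filter fun i => v i ∈ C p := by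
      ext i
      simp only [Finset.mem_filter, Finset.mem_biUnion]
      tauto
    rw [← hsum, hunion, Finset.card_biUnion]
    · rfl
    · intro p hp q hq hpq
      exact Finset.disjoint_left.mpr fun i hi hi' => Finset.disjoint_left.mp (hdisj hp hq hpq)
        (Finset.mem_filter.mp hi).2 (Finset.mem_filter.mp hi').2
  intro i hi
  simpa using Finset.filter_card_eq hcard i hi

/-- By (Z1) and (Z2) the block row at position `pu` has as many 1s in the block columns at
positions `pu - 1, …, 2n + 1` as it has rows, so all its 1s lie there. -/
lemma exists_vertColBlock_of_mem_vertRowBlock (hL : IsLacingDiagram n dx dy L)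
    (hv : IsZelevinsky n dx dy L v) {pu : ℕ} (hpu : 2 ≤ pu) (hpu' : pu ≤ 2 * n + 1) {i : ℕ}
    (hi : i ∈ vertRowBlock n dx dy pu) :
    ∃ p, pu - 1 ≤ p ∧ p ≤ 2 * n + 1 ∧ v i ∈ vertColBlock n dx dy p := by
  have hZ2 := hv.2.2.1 (pu - 1) (by omega) (by omega)
  rw [Nat.sub_add_cancel (by omega), ← pathCount_succ hL (by omega) (by omega),
    Nat.sub_add_cancel (by omega)] at hZ2
  have hZ1 : ∑ p ∈ Finset.Icc pu (2 * n + 1),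
      (onesIn v (vertRowBlock n dx dy pu) (vertColBlock n dx dy p) : ℤ)
        = colSize n dx dy pu - pathCount n dx dy L (pu - 1) pu := by
    rw [← sum_laceCount (by omega) hpu']
    refine Finset.sum_congr rfl fun p hp => ?_
    rw [Finset.mem_Icc] at hp
    exact hv.2.1 pu p (by omega) hp.1 hp.2
  have hsum : ∑ p ∈ Finset.Icc (pu - 1) (2 * n + 1),
      onesIn v (vertRowBlock n dx dy pu) (vertColBlock n dx dy p)
        = (vertRowBlock n dx dy pu).card := by
    rw [← Finset.insert_Icc_add_one_left_eq_Icc (by omega), Finset.sum_insert (by simp),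
      Nat.sub_add_cancel (by omega), card_vertRowBlock]
    zify
    rw [hZ1, hZ2]
    ring
  have hdisj : (↑(Finset.Icc (pu - 1) (2 * n + 1)) : Set ℕ).PairwiseDisjoint
      (vertColBlock n dx dy) := fun p hp q hq hpq => by
    simp only [Finset.coe_Icc, Set.mem_Icc] at hp hq
    exact vertColBlock_disjoint (by omega) hp.2 (by omega) hq.2 hpq
  obtain ⟨p, hp, hvp⟩ := exists_mem_of_sum_onesIn_eq_card hdisj hsum i hi
  rw [Finset.mem_Icc] at hp
  exact ⟨p, hp.1, hp.2, hvp⟩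

lemma colX_succ_le_of_mem_vertColBlock {m p c : ℕ} (hm : 2 * (n - m) ≤ p) (hp : 1 ≤ p)
    (hp' : p ≤ 2 * n + 1) (hc : c ∈ vertColBlock n dx dy p) : colX n dx (m + 1) ≤ c := by
  rcases Nat.mod_two_eq_zero_or_one p with hp2 | hp2
  · exact (colX_antitone n dx (by omega)).trans (mem_vertColBlock_of_even hp2 hp hp' hc).1
  · have := (mem_vertColBlock_of_odd hp2 hc).1
    have := colX_le_dX (n := n) (dx := dx) (m + 1)
    simp only [colY] at *
    omega

lemma lt_colY_succ_of_mem_vertColBlock {k p c : ℕ} (hk : 2 * (n - k) + 1 ≤ p) (hp' : p ≤ 2 * n + 1)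
    (hc : c ∈ vertColBlock n dx dy p) : c < colY n dx dy (k + 1) := by
  rcases Nat.mod_two_eq_zero_or_one p with hp2 | hp2
  · have := (mem_vertColBlock_of_even hp2 (by omega) hp' hc).2
    have := colX_le_dX (n := n) (dx := dx) (n - p / 2)
    simp only [colY] at *
    omega
  · have := (mem_vertColBlock_of_odd hp2 hc).2
    have := rowY_mono dy (show n - p / 2 + 1 ≤ k + 1 by omega)
    simp only [colY] at *
    omega

lemma colX_le_apply_of_lt_rowY (hL : IsLacingDiagram n dx dy L) (hv : IsZelevinsky n dx dy L v)
    {m i : ℕ} (hi : i < rowY dy m) : colX n dx m ≤ v i := by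
  rcases le_or_gt n m with hm | hm
  · rw [colX_of_le hm]
    exact Nat.zero_le _
  obtain ⟨m', hm', hi₁, hi₂⟩ := exists_rowY_block hi
  have hmem : i ∈ vertRowBlock n dx dy (2 * (n - m') + 1) := by
    rw [vertRowBlock, if_pos (by omega), show n - (2 * (n - m') + 1 - 1) / 2 = m' by omega,
      Finset.mem_Ico, ← rowY_succ]
    exact ⟨hi₁, hi₂⟩
  obtain ⟨p, hp, hp', hvp⟩ :=
    exists_vertColBlock_of_mem_vertRowBlock hL hv (by omega) (by omega) hmem
  exact (colX_antitone n dx hm').trans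
    (colX_succ_le_of_mem_vertColBlock (by omega) (by omega) hp' hvp)

lemma apply_lt_colY_of_rowX_le (hL : IsLacingDiagram n dx dy L) (hv : IsZelevinsky n dx dy L v)
    {k i : ℕ} (hi : rowX n dx dy k ≤ i) (hi' : i < dd n dx dy) : v i < colY n dx dy (k + 1) := by
  rw [rowX] at hi
  rw [dd] at hi'
  obtain ⟨k', hk', hk'n, hk'₁, hk'₂⟩ := exists_colX_block (show i - dY n dy < dX n dx by omega)
  have hkk' : k' ≤ k := by
    by_contra! h
    have := colX_antitone n dx (show k ≤ k' - 1 by omega)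
    omega
  have hmem : i ∈ vertRowBlock n dx dy (2 * (n - k') + 2) := by
    rw [vertRowBlock, if_neg (by omega), show n - (2 * (n - k') + 2) / 2 + 1 = k' by omega,
      Finset.mem_Ico, rowX, add_assoc, colX_add_self hk' hk'n]
    omega
  obtain ⟨p, hp, hp', hvp⟩ :=
    exists_vertColBlock_of_mem_vertRowBlock hL hv (by omega) (by omega) hmem
  calc v i < colY n dx dy (k' + 1) := lt_colY_succ_of_mem_vertColBlock (by omega) hp' hvp
    _ ≤ colY n dx dy (k + 1) := Nat.add_le_add_left (rowY_mono dy (by omega)) _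

end ZelevinskyBlocks

lemma exists_north_or_south_of_mem_Pstar {n : ℕ} {dx dy : ℕ → ℕ} {i j : ℕ}
    (h : (i, j) ∈ Pstar n dx dy) :
    i < dY n dy ∧ j < dX n dx ∧ ∃ k ≤ n,
      (i < rowY dy (k - 1) ∧ j < colX n dx (k - 1)) ∨ (rowY dy (k + 1) ≤ i ∧ colX n dx k ≤ j) := by
  simp only [Pstar, Finset.mem_sdiff, Finset.mem_product, Finset.mem_range] at h
  obtain ⟨⟨hi, hj⟩, hsnake⟩ := h
  obtain ⟨k, hk, hkn, hj₁, hj₂⟩ := exists_colX_block hj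
  refine ⟨hi, hj, k, hkn, ?_⟩
  by_contra! hmid
  apply hsnake
  simp only [snake, Finset.mem_biUnion, Finset.mem_union, alphaBlock, betaBlock,
    Finset.mem_product, Finset.mem_Ico, Finset.mem_Icc]
  refine ⟨k, ⟨hk, hkn⟩, ?_⟩
  have hα := rowY_succ dy (k - 1)
  rw [Nat.sub_add_cancel hk] at hα
  have hβ := rowY_succ dy k
  have hx := colX_add_self (dx := dx) hk hkn
  omega

/-- Every `P ∈ Pipes(v_0, v(Ω))` contains `P_*` as a subset. -/
theorem pstar_subset (n : ℕ) (dx dy : ℕ → ℕ) (L₀ : LaceData)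
    (hL₀ : IsLacingDiagram n dx dy L₀) (vZ : Equiv.Perm ℕ)
    (hvZ : IsZelevinsky n dx dy L₀ vZ)
    (P : Finset (ℕ × ℕ)) (hP : P ∈ pipesNW n dx dy vZ) :
    Pstar n dx dy ⊆ P := by
  simp only [pipesNW, Finset.mem_filter, Finset.mem_powerset] at hP
  obtain ⟨hPgrid, hδ⟩ := hP
  have hrect : ∀ p ∈ P, p.1 < dY n dy ∧ p.2 < dX n dx := fun p hp => by
    simpa using hPgrid hp
  have hdY : dY n dy ≤ dd n dx dy := Nat.le_add_right _ _
  have hdX : dX n dx ≤ dd n dx dy := Nat.le_add_left _ _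
  rintro ⟨i, j⟩ hij
  obtain ⟨hi, hj, k, hkn, ⟨hi', hj'⟩ | ⟨hi', hj'⟩⟩ := exists_north_or_south_of_mem_Pstar hij
  · refine mem_of_le_demazure ((rowY_mono dy (by omega : k - 1 ≤ n + 1)).trans hdY)
      ((colX_le_dX _).trans hdX) (fun i' hi' => ?_) i hi' j hj'
    rw [hδ]
    exact colX_le_apply_of_lt_rowY hL₀ hvZ hi'
  · refine mem_of_isUpperSet hrect hdY hdX
      (S := {q | ∃ k, colX n dx k ≤ q.2 ∧ rowY dy (k + 1) ≤ q.1}) ?_ ?_ i hi j hj ⟨k, hj', hi'⟩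
    · rintro a b hab ⟨k, hk₁, hk₂⟩
      exact ⟨k, hk₁.trans hab.2, hk₂.trans hab.1⟩
    · rintro t - js hjs ⟨k, hk₁, hk₂⟩
      have := apply_lt_colY_of_rowX_le hL₀ hvZ (k := k) (i := dY n dy + js)
        (by rw [rowX]; omega) (by rw [dd]; omega)
      rw [hδ]
      rw [colY] at this
      omega

end QP
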